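/- The generating function identity ∑_{N₁ ≥ 0} q^{N₁(N₁+1)/2} (−q;q)_{N₁−1}(1 + q^{N₁})/(q²;q²)_{N₁} = (−q;q)_∞ holds; equivalently, the number of overpartitions of n counted by the left side equals the number of partitions of n into distinct positive parts. -/

import Mathlib

open PowerSeries

/-- The infinite sum ∑_{i≥0} c i of power series, assuming (as holds in all uses below)
that the order of c i tends to infinity, realized coefficientwise. -/
noncomputable def seriesSum (c : ℕ → PowerSeries ℚ) : PowerSeries ℚ :=
  PowerSeries.mk fun n =>
    PowerSeries.coeff n (∑ i ∈ Finset.range (n + 1), c i)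

/-- The infinite product ∏_{i≥0} f i of power series, assuming (as holds in all uses
below) that f i = 1 + (terms of order > i), realized coefficientwise. -/
noncomputable def seriesProd (f : ℕ → PowerSeries ℚ) : PowerSeries ℚ :=
  PowerSeries.mk fun n =>
    PowerSeries.coeff n (∏ i ∈ Finset.range (n + 1), f i)

/-- (−q;q)_N = ∏_{i=1}^{N} (1 + qⁱ). -/
noncomputable def pochNeg (N : ℕ) : PowerSeries ℚ :=
  ∏ i ∈ Finset.range N, (1 + (PowerSeries.X : PowerSeries ℚ) ^ (i + 1))

/-- (q;q)_N = ∏_{i=1}^{N} (1 − qⁱ). -/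
noncomputable def pochPos (N : ℕ) : PowerSeries ℚ :=
  ∏ i ∈ Finset.range N, (1 - (PowerSeries.X : PowerSeries ℚ) ^ (i + 1))

/-- (q²;q²)_N = ∏_{i=1}^{N} (1 − q^{2i}). -/
noncomputable def pochPos2 (N : ℕ) : PowerSeries ℚ :=
  ∏ i ∈ Finset.range N, (1 - (PowerSeries.X : PowerSeries ℚ) ^ (2 * (i + 1)))


section FieldAux
variable {F : Type*} [Field F]


noncomputable def pp (x : F) (N : ℕ) : F := ∏ i ∈ Finset.range N, (1 - x ^ (i + 1))
noncomputable def bb (x : F) (N : ℕ) : F := ∏ i ∈ Finset.range N, (1 + x ^ (i + 1))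

lemma pp_succ (x : F) (N : ℕ) : pp x (N+1) = pp x N * (1 - x ^ (N+1)) := Finset.prod_range_succ _ _
lemma bb_succ (x : F) (N : ℕ) : bb x (N+1) = bb x N * (1 + x ^ (N+1)) := Finset.prod_range_succ _ _
lemma pp_zero (x : F) : pp x 0 = 1 := rfl

lemma pp_ne_zero {x : F} (hx : ∀ k : ℕ, 1 - x ^ (k+1) ≠ 0) (N : ℕ) : pp x N ≠ 0 :=
  Finset.prod_ne_zero_iff.2 fun i _ => hx i

lemma tri_succ (J : ℕ) : (J+1) * (J+1+1) / 2 = J * (J+1) / 2 + (J+1) := by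
  obtain ⟨f, hf⟩ := Nat.even_mul_succ_self J
  have h : (J+1) * (J+1+1) = J * (J+1) + 2*(J+1) := by ring
  omega

lemma pascal_aux {P Q a b t : F} (hP : P ≠ 0) (hQ : Q ≠ 0) (ha : 1 - a ≠ 0)
    (hb : 1 - b ≠ 0) (hab : 1 - a * b ≠ 0) :
    t * a * (P * (1 - a) * (Q * (1 - b)))⁻¹
      = (t * a * (P * (1 - a) * Q)⁻¹ + a * b * (t * (P * (Q * (1 - b)))⁻¹)) * (1 - a * b)⁻¹ := by
  have hD2 : P * (1 - a) * Q ≠ 0 := mul_ne_zero (mul_ne_zero hP ha) hQ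
  have hD3 : P * (Q * (1 - b)) ≠ 0 := mul_ne_zero hP (mul_ne_zero hQ hb)
  have hD1 : P * (1 - a) * (Q * (1 - b)) ≠ 0 := mul_ne_zero (mul_ne_zero hP ha) (mul_ne_zero hQ hb)
  simp only [← div_eq_mul_inv]
  rw [mul_div_assoc']
  rw [div_add_div _ _ hD2 hD3, div_div,
    div_eq_div_iff hD1 (mul_ne_zero (mul_ne_zero hD2 hD3) hab)]
  ring

lemma field_key {x : F} (hx : ∀ k : ℕ, 1 - x ^ (k+1) ≠ 0) (M : ℕ) :
    ∑ N ∈ Finset.range (M+1), x ^ (N * (N+1) / 2) * (pp x N * pp x (M - N))⁻¹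
      = bb x M * (pp x M)⁻¹ := by
  induction M with
  | zero => simp [pp, bb]
  | succ M ih =>
    have hne := pp_ne_zero hx
    have hterm : ∀ N ∈ Finset.range (M+2),
        x ^ (N * (N+1) / 2) * (pp x N * pp x (M + 1 - N))⁻¹ =
        ((if N ≤ M then x ^ (N * (N+1) / 2) * (pp x N * pp x (M - N))⁻¹ else 0)
          + x ^ (M+1) * (if 1 ≤ N then
              x ^ ((N-1) * (N-1+1) / 2) * (pp x (N-1) * pp x (M - (N-1)))⁻¹ else 0))
          * (1 - x ^ (M+1))⁻¹ := by
      intro N hN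
      rw [Finset.mem_range] at hN
      rcases Nat.eq_zero_or_pos N with rfl | hN1
      · rw [if_pos (Nat.zero_le M), if_neg (by norm_num : ¬ (1:ℕ) ≤ 0)]
        simp only [Nat.zero_mul, Nat.zero_div, pow_zero, mul_zero, add_zero, pp_zero, one_mul,
          Nat.sub_zero]
        rw [pp_succ]
        field_simp
      rcases Nat.lt_or_ge N (M+1) with hNM | hNM
      · -- 1 ≤ N ≤ M
        obtain ⟨J, rfl⟩ : ∃ J, N = J + 1 := ⟨N - 1, by omega⟩
        obtain ⟨K, rfl⟩ : ∃ K, M = J + 1 + K := ⟨M - (J+1), by omega⟩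
        rw [if_pos (by omega), if_pos (by omega)]
        have e1 : J + 1 + K + 1 - (J + 1) = K + 1 := by omega
        have e2 : J + 1 + K - (J + 1) = K := by omega
        have e3 : J + 1 - 1 = J := by omega
        rw [e1, e2, e3]
        rw [(by omega : J + 1 + K - J = K + 1)]
        rw [tri_succ, pp_succ x J, pp_succ x K]
        have hJ := hne J; have hK := hne K
        have hJ1 : (1 : F) - x ^ (J+1) ≠ 0 := hx J
        have hK1 : (1 : F) - x ^ (K+1) ≠ 0 := hx K
        have hab : (1 : F) - x ^ (J+1) * x ^ (K+1) ≠ 0 := by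
          rw [← pow_add, show J+1+(K+1) = J+K+1+1 by omega]; exact hx (J+K+1)
        rw [pow_add x (J*(J+1)/2) (J+1), show J+1+K+1 = (J+1)+(K+1) by omega,
          pow_add x (J+1) (K+1)]
        exact pascal_aux hJ hK hJ1 hK1 hab
      · -- N = M+1
        have : N = M + 1 := by omega
        subst this
        rw [if_neg (by omega), if_pos (by omega)]
        rw [(by omega : M + 1 - 1 = M), (by omega : M + 1 - (M+1) = 0),
          (by omega : M - M = 0), tri_succ, pp_zero, pp_succ]
        have hM := hne M
        have hM1 : (1 : F) - x ^ (M+1) ≠ 0 := hx M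
        field_simp
        ring
    rw [Finset.sum_congr rfl hterm, ← Finset.sum_mul, Finset.sum_add_distrib]
    have h1 : (∑ N ∈ Finset.range (M+2),
        if N ≤ M then x ^ (N * (N+1) / 2) * (pp x N * pp x (M - N))⁻¹ else 0)
        = bb x M * (pp x M)⁻¹ := by
      rw [Finset.sum_range_succ, if_neg (by omega), add_zero, ← ih]
      refine Finset.sum_congr rfl fun N hN => ?_
      rw [Finset.mem_range] at hN
      rw [if_pos (by omega)]
    have h2 : (∑ N ∈ Finset.range (M+2), x ^ (M+1) * (if 1 ≤ N then
        x ^ ((N-1) * (N-1+1) / 2) * (pp x (N-1) * pp x (M - (N-1)))⁻¹ else 0))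
        = x ^ (M+1) * (bb x M * (pp x M)⁻¹) := by
      rw [← Finset.mul_sum, ← ih]
      congr 1
      rw [Finset.sum_range_succ']
      have hc : ∀ i ∈ Finset.range (M+1),
          (if 1 ≤ i + 1 then
            x ^ ((i+1-1) * (i+1-1+1) / 2) * (pp x (i+1-1) * pp x (M - (i+1-1)))⁻¹ else 0)
          = x ^ (i * (i+1) / 2) * (pp x i * pp x (M - i))⁻¹ := by
        intro i _
        rw [if_pos (by omega), (by omega : i + 1 - 1 = i)]
      rw [Finset.sum_congr rfl hc, if_neg (by norm_num : ¬ (1:ℕ) ≤ 0), add_zero]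
    rw [h1, h2, bb_succ, pp_succ]
    have hM := pp_ne_zero hx M
    have hM1 : (1 : F) - x ^ (M+1) ≠ 0 := hx M
    field_simp


end FieldAux

-- constant coefficients
lemma cc_pochPos (N : ℕ) : constantCoeff (pochPos N) = 1 := by
  rw [pochPos, map_prod]
  simp

lemma cc_pochNeg (N : ℕ) : constantCoeff (pochNeg N) = 1 := by
  rw [pochNeg, map_prod]
  simp

lemma pochPos_ne_zero (N : ℕ) : pochPos N ≠ 0 := fun h => by
  have := cc_pochPos N; rw [h, map_zero] at this; norm_num at this

-- the embedding into Laurent series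
noncomputable abbrev LL : PowerSeries ℚ →+* LaurentSeries ℚ := HahnSeries.ofPowerSeries ℤ ℚ

lemma LL_inj : Function.Injective LL := HahnSeries.ofPowerSeries_injective

lemma LL_inv (φ : PowerSeries ℚ) (h : constantCoeff φ ≠ 0) : LL (φ⁻¹) = (LL φ)⁻¹ := by
  have h1 : φ * φ⁻¹ = 1 := PowerSeries.mul_inv_cancel φ h
  have h2 : LL φ * LL (φ⁻¹) = 1 := by rw [← map_mul, h1, map_one]
  exact (inv_eq_of_mul_eq_one_right h2).symm

lemma LL_pochPos (N : ℕ) : LL (pochPos N) = pp (LL X) N := by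
  rw [pochPos, pp, map_prod]
  simp

lemma LL_pochNeg (N : ℕ) : LL (pochNeg N) = bb (LL X) N := by
  rw [pochNeg, bb, map_prod]
  simp

lemma hxL : ∀ k : ℕ, (1 : LaurentSeries ℚ) - (LL X) ^ (k+1) ≠ 0 := by
  intro k h
  have h2 : LL (1 - X ^ (k+1)) = LL 0 := by
    rw [map_sub, map_one, map_pow, map_zero, h]
  have h3 : (1 : PowerSeries ℚ) - X ^ (k+1) = 0 := LL_inj h2
  have h4 := congrArg (constantCoeff) h3
  simp at h4

lemma PS (n : ℕ) :
    ∑ N ∈ Finset.range (n+1),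
        (X : PowerSeries ℚ) ^ (N * (N+1) / 2) * (pochPos N * pochPos (n - N))⁻¹
      = pochNeg n * (pochPos n)⁻¹ := by
  apply LL_inj
  rw [map_sum, map_mul, LL_inv _ (by rw [cc_pochPos]; norm_num), LL_pochNeg, LL_pochPos]
  rw [← field_key hxL n]
  refine Finset.sum_congr rfl fun N _ => ?_
  rw [map_mul, map_pow, LL_inv _ (by rw [map_mul, cc_pochPos, cc_pochPos]; norm_num),
    map_mul, LL_pochPos, LL_pochPos]

lemma PS2 (n : ℕ) :
    ∑ N ∈ Finset.range (n+1),
        (X : PowerSeries ℚ) ^ (N * (N+1) / 2) * (pochPos N * pochPos (n - N))⁻¹ * pochPos n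
      = pochNeg n := by
  rw [← Finset.sum_mul, PS, mul_assoc, mul_comm ((pochPos n)⁻¹), PowerSeries.mul_inv_cancel _
    (by rw [cc_pochPos]; norm_num), mul_one]

-- products of (1 - X^{c+i+1}) are 1 + X^{c+1} * h
lemma prodOneSub (c m : ℕ) : ∃ h : PowerSeries ℚ,
    ∏ i ∈ Finset.range m, (1 - (X : PowerSeries ℚ) ^ (c + i + 1)) = 1 + X ^ (c+1) * h := by
  induction m with
  | zero => exact ⟨0, by simp⟩
  | succ m ih =>
    obtain ⟨h, hh⟩ := ih
    refine ⟨h * (1 - X ^ (c + m + 1)) - X ^ m, ?_⟩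
    rw [Finset.prod_range_succ, hh]
    ring

lemma tri_ge (N : ℕ) : N ≤ N * (N+1) / 2 := by
  rcases Nat.eq_zero_or_pos N with rfl | hN
  · simp
  · have h : N * (N+1) = N * N + N := by ring
    have h2 : N ≤ N * N := Nat.le_mul_of_pos_left N hN
    omega

lemma divis {n N : ℕ} (hN : N ≤ n) :
    (X : PowerSeries ℚ) ^ (n+1) ∣
      (X : PowerSeries ℚ) ^ (N * (N+1) / 2) * (pochPos N)⁻¹ -
        (X : PowerSeries ℚ) ^ (N * (N+1) / 2) * (pochPos N * pochPos (n - N))⁻¹ * pochPos n := by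
  obtain ⟨h, hR⟩ := prodOneSub (n - N) N
  have hC : pochPos n = pochPos (n - N) * (1 + X ^ (n - N + 1) * h) := by
    rw [← hR]
    conv_lhs => rw [show n = (n - N) + N by omega]
    simp only [pochPos]
    rw [Finset.prod_range_add]
  have hB : (pochPos (n - N))⁻¹ * pochPos (n - N) = 1 := by
    rw [mul_comm]
    exact PowerSeries.mul_inv_cancel _ (by rw [cc_pochPos]; norm_num)
  have hEq : (X : PowerSeries ℚ) ^ (N * (N+1) / 2) * (pochPos N)⁻¹ -
      (X : PowerSeries ℚ) ^ (N * (N+1) / 2) * (pochPos N * pochPos (n - N))⁻¹ * pochPos n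
      = X ^ (N * (N+1) / 2 + (n - N + 1)) * (-((pochPos N)⁻¹ * h)) := by
    rw [hC, PowerSeries.mul_inv_rev, pow_add]
    linear_combination (-(X ^ (N * (N+1) / 2) * (pochPos N)⁻¹ *
      (1 + X ^ (n - N + 1) * h))) * hB
  rw [hEq]
  exact Dvd.dvd.mul_right (pow_dvd_pow X (by have := tri_ge N; omega)) _

lemma inv_one_ps : ((1 : PowerSeries ℚ))⁻¹ = 1 := by
  have := PowerSeries.mul_inv_cancel (1 : PowerSeries ℚ) (by simp)
  simpa using this

lemma summand_eq (N : ℕ) :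
    (if N = 0 then 1 else
        (PowerSeries.X : PowerSeries ℚ) ^ (N * (N + 1) / 2) * pochNeg (N - 1) *
          (1 + (PowerSeries.X : PowerSeries ℚ) ^ N) * (pochPos2 N)⁻¹)
      = (X : PowerSeries ℚ) ^ (N * (N+1) / 2) * (pochPos N)⁻¹ := by
  rcases Nat.eq_zero_or_pos N with rfl | hN
  · simp [pochPos, inv_one_ps]
  obtain ⟨K, rfl⟩ : ∃ K, N = K + 1 := ⟨N - 1, by omega⟩
  rw [if_neg (by omega), show K + 1 - 1 = K by omega]
  set N := K + 1 with hNdef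
  have h1 : pochNeg K * (1 + (X : PowerSeries ℚ) ^ N) = pochNeg N := by
    rw [hNdef, pochNeg, pochNeg, Finset.prod_range_succ]
  have h2 : pochPos2 N = pochPos N * pochNeg N := by
    rw [pochPos2, pochPos, pochNeg, ← Finset.prod_mul_distrib]
    refine Finset.prod_congr rfl fun i _ => ?_
    ring
  have h3 : pochNeg N * (pochNeg N)⁻¹ = 1 :=
    PowerSeries.mul_inv_cancel _ (by rw [cc_pochNeg]; norm_num)
  rw [mul_assoc ((X : PowerSeries ℚ) ^ (N * (N+1) / 2)), h1, h2, PowerSeries.mul_inv_rev]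
  linear_combination (X ^ (N * (N+1) / 2) * (pochPos N)⁻¹) * h3

/-- ∑_{N₁≥0} q^{N₁(N₁+1)/2} (−q)_{N₁−1} (1+q^{N₁}) / (q²;q²)_{N₁} = (−q)_∞,
where the N₁ = 0 term of the sum is 1. -/
theorem sang_shi_k2_a1_simplified :
    seriesSum (fun N => if N = 0 then 1 else
        (PowerSeries.X : PowerSeries ℚ) ^ (N * (N + 1) / 2) * pochNeg (N - 1) *
          (1 + (PowerSeries.X : PowerSeries ℚ) ^ N) * (pochPos2 N)⁻¹) =
      seriesProd (fun i => 1 + (PowerSeries.X : PowerSeries ℚ) ^ (i + 1)) := by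
  apply PowerSeries.ext
  intro n
  rw [seriesSum, seriesProd, coeff_mk, coeff_mk]
  rw [Finset.sum_congr rfl fun N _ => summand_eq N]
  have hprod : (∏ i ∈ Finset.range (n+1), (1 + (X : PowerSeries ℚ) ^ (i+1))) = pochNeg (n+1) :=
    rfl
  rw [hprod]
  have hd2 : pochNeg (n+1) = pochNeg n + X ^ (n+1) * pochNeg n := by
    have h : pochNeg (n+1) = pochNeg n * (1 + X ^ (n+1)) := Finset.prod_range_succ _ n
    rw [h]; ring
  have hdvd : (X : PowerSeries ℚ) ^ (n+1) ∣
      (∑ N ∈ Finset.range (n+1), X ^ (N * (N+1) / 2) * (pochPos N)⁻¹) - pochNeg (n+1) := by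
    rw [hd2, show pochNeg n + (X : PowerSeries ℚ) ^ (n+1) * pochNeg n
      = (∑ N ∈ Finset.range (n+1),
          X ^ (N * (N+1) / 2) * (pochPos N * pochPos (n - N))⁻¹ * pochPos n)
        + X ^ (n+1) * pochNeg n from by rw [PS2]]
    have hsplit : (∑ N ∈ Finset.range (n+1), (X : PowerSeries ℚ) ^ (N * (N+1) / 2) *
          (pochPos N)⁻¹)
        - (∑ N ∈ Finset.range (n+1),
            X ^ (N * (N+1) / 2) * (pochPos N * pochPos (n - N))⁻¹ * pochPos n
            + X ^ (n+1) * pochNeg n)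
        = (∑ N ∈ Finset.range (n+1),
            (X ^ (N * (N+1) / 2) * (pochPos N)⁻¹
              - X ^ (N * (N+1) / 2) * (pochPos N * pochPos (n - N))⁻¹ * pochPos n))
          - X ^ (n+1) * pochNeg n := by
      rw [Finset.sum_sub_distrib]; ring
    rw [hsplit]
    exact dvd_sub
      (Finset.dvd_sum fun N hN => divis (by rw [Finset.mem_range] at hN; omega))
      (dvd_mul_right _ _)
  rw [PowerSeries.X_pow_dvd_iff] at hdvd
  have h0 := hdvd n (by omega)
  rw [map_sub, sub_eq_zero] at h0
  exact h0
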